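/- arXiv:1410.6128 — 3 statements merged into one kernel-verified Lean document; each statement's English description precedes it below -/
import Mathlib

section
/- Let arc : [0,∞) → [1,∞) assign to a ≥ 0 the length of a circular arc lying above a chord of length 1 and enclosing area a between the arc and the chord. Then arc is strictly increasing, arc is convex on [0, π/8], and there exist η > 0 such that arc(a) ≥ 1 + η·a² for all a ∈ [0, η). -/
/-!
Parametrize the arc by the half-angle `θ ∈ [0, π)` it subtends at the centre of its circle, whose
radius is `1 / (2 sin θ)`. The enclosed area `A θ` and the length `L θ` both increase strictly in
`θ`, and `A` maps `[0, π)` onto `[0, ∞)`; hence `arc = L ∘ A⁻¹` increases strictly. Their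
derivatives satisfy `L' = 2 sin θ · A'`, i.e. `arc'` is the curvature, so by Cauchy's mean value
theorem every difference quotient of `arc` between the areas `A θ₁ < A θ₂` equals `2 sin c` for
some `c ∈ (θ₁, θ₂)`. On `[0, π/8] = A '' [0, π/2]` these quotients increase, which is convexity.
Finally `A θ ≤ θ / 2` on `[0, π/2]` and `sin θ ≤ θ (1 - θ² / (2π²))` give `arc a ≥ 1 + a² / 5`
for `a < 1/5`.
-/

open Real Set Filter Topology

theorem StrictMonoOn.of_comp_of_surjOn {α β γ : Type*} [LinearOrder α] [Preorder β] [Preorder γ]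
    {f : α → β} {g : β → γ} {s : Set α} {t : Set β} (hf : StrictMonoOn f s) (hft : SurjOn f s t)
    (hgf : StrictMonoOn (g ∘ f) s) : StrictMonoOn g t := by
  rintro _ hx _ hy hxy
  obtain ⟨a, ha, rfl⟩ := hft hx
  obtain ⟨b, hb, rfl⟩ := hft hy
  exact hgf ha hb ((hf.lt_iff_lt ha hb).1 hxy)

lemma Real.sin_le_mul_one_sub {θ : ℝ} (h0 : 0 ≤ θ) (h : θ ≤ π) :
    sin θ ≤ θ * (1 - θ ^ 2 / (2 * π ^ 2)) := by
  have hπ := pi_pos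
  have hsin : sin (θ / 2) ≤ θ / 2 := sin_le (by linarith)
  have hcos0 : 0 ≤ cos (θ / 2) := cos_nonneg_of_mem_Icc ⟨by linarith, by linarith⟩
  have hcos : cos (θ / 2) ≤ 1 - θ ^ 2 / (2 * π ^ 2) := by
    have := cos_le_one_sub_mul_cos_sq (x := θ / 2) (by rw [abs_of_nonneg (by linarith)]; linarith)
    convert this using 2
    field_simp
  calc sin θ = 2 * sin (θ / 2) * cos (θ / 2) := by rw [← sin_two_mul]; ring_nf
    _ ≤ 2 * (θ / 2) * (1 - θ ^ 2 / (2 * π ^ 2)) := by gcongr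
    _ = θ * (1 - θ ^ 2 / (2 * π ^ 2)) := by ring

lemma Real.sin_sub_mul_cos_pos {θ : ℝ} (h0 : 0 < θ) (h : θ < π) : 0 < sin θ - θ * cos θ := by
  have hs : 0 < sin θ := sin_pos_of_pos_of_lt_pi h0 h
  rcases le_or_gt (cos θ) 0 with hc | hc
  · nlinarith
  · have hθ : θ < π / 2 := by
      by_contra! hle
      exact (cos_nonpos_of_pi_div_two_le_of_le hle (by linarith)).not_gt hc
    have := lt_tan h0 hθ
    rw [tan_eq_sin_div_cos, lt_div_iff₀ hc] at this
    linarith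

namespace ChordArc

/-- Division by zero gives `area 0 = 0`, the right value for the degenerate arc on the chord. -/
noncomputable def area (θ : ℝ) : ℝ := (θ - sin θ * cos θ) / (4 * sin θ ^ 2)

/-- `θ / sin θ`, extended continuously by `length 0 = 1`. -/
noncomputable def length (θ : ℝ) : ℝ := (sinc θ)⁻¹

lemma area_zero : area 0 = 0 := by simp [area]

lemma length_zero : length 0 = 1 := by simp [length]

lemma length_of_ne_zero {θ : ℝ} (h : θ ≠ 0) : length θ = θ / sin θ := by
  rw [length, sinc_of_ne_zero h, inv_div]

lemma area_pi_div_two : area (π / 2) = π / 8 := by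
  simp only [area, sin_pi_div_two, cos_pi_div_two, mul_zero, sub_zero, one_pow, mul_one]
  ring

lemma hasDerivAt_area {θ : ℝ} (h : sin θ ≠ 0) :
    HasDerivAt area ((sin θ - θ * cos θ) / (2 * sin θ ^ 3)) θ := by
  have hnum : HasDerivAt (fun t => t - sin t * cos t)
      (1 - (cos θ * cos θ + sin θ * -sin θ)) θ :=
    (hasDerivAt_id θ).sub ((hasDerivAt_sin θ).mul (hasDerivAt_cos θ))
  have hden : HasDerivAt (fun t => 4 * sin t ^ 2) (4 * (2 * sin θ ^ 1 * cos θ)) θ :=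
    ((hasDerivAt_sin θ).pow 2).const_mul 4
  refine (hnum.div hden (mul_ne_zero four_ne_zero (pow_ne_zero 2 h))).congr_deriv ?_
  field_simp
  linear_combination 2 * sin θ * sin_sq_add_cos_sq θ

lemma hasDerivAt_length {θ : ℝ} (h : sin θ ≠ 0) :
    HasDerivAt length ((sin θ - θ * cos θ) / sin θ ^ 2) θ := by
  have hθ : θ ≠ 0 := by rintro rfl; simp at h
  have hdiv : HasDerivAt (fun x => x / sin x) ((sin θ - θ * cos θ) / sin θ ^ 2) θ :=
    ((hasDerivAt_id θ).div (hasDerivAt_sin θ) h).congr_deriv (by simp)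
  refine hdiv.congr_of_eventuallyEq ?_
  filter_upwards [eventually_ne_nhds hθ] with x hx using length_of_ne_zero hx

lemma area_nonneg {θ : ℝ} (h : 0 ≤ θ) : 0 ≤ area θ := by
  have : sin θ * cos θ ≤ θ := by
    have := sin_le (x := 2 * θ) (by linarith)
    rw [sin_two_mul] at this
    linarith
  exact div_nonneg (by linarith) (by positivity)

lemma area_le {θ : ℝ} (h0 : 0 ≤ θ) (h : θ ≤ π / 2) : area θ ≤ θ / 2 := by
  rcases h0.eq_or_lt with rfl | hpos
  · simp [area_zero]
  have hπ := pi_pos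
  have hnum : θ - sin θ * cos θ ≤ 2 * θ ^ 3 / 3 := by
    have := sin_ge_sub_cube (x := 2 * θ) (by linarith)
    rw [sin_two_mul] at this
    nlinarith
  have hden : 4 * (2 / π * θ) ^ 2 ≤ 4 * sin θ ^ 2 := by
    gcongr
    exact mul_le_sin h0 h
  calc area θ ≤ (2 * θ ^ 3 / 3) / (4 * (2 / π * θ) ^ 2) :=
        div_le_div₀ (by positivity) hnum (by positivity) hden
    _ = π ^ 2 / 24 * θ := by field_simp; ring
    _ ≤ θ / 2 := by
      have : π ^ 2 ≤ 12 := by nlinarith [pi_lt_d2]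
      nlinarith

lemma continuousWithinAt_area_zero : ContinuousWithinAt area (Ici 0) 0 := by
  have hlin : Tendsto (fun θ : ℝ => θ / 2) (𝓝[≥] 0) (𝓝 0) := by
    simpa using ((continuous_id.div_const (2 : ℝ)).tendsto 0).mono_left nhdsWithin_le_nhds
  rw [ContinuousWithinAt, area_zero]
  refine tendsto_of_tendsto_of_tendsto_of_le_of_le' tendsto_const_nhds hlin ?_ ?_
  · filter_upwards [self_mem_nhdsWithin] with θ hθ using area_nonneg hθ
  · filter_upwards [Ico_mem_nhdsGE (by positivity : (0 : ℝ) < π / 2)] with θ hθ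
    exact area_le hθ.1 hθ.2.le

lemma continuousOn_area : ContinuousOn area (Ico 0 π) := by
  rintro θ ⟨h0, hπ⟩
  rcases h0.eq_or_lt with rfl | hpos
  · exact continuousWithinAt_area_zero.mono Ico_subset_Ici_self
  · exact (hasDerivAt_area (sin_pos_of_pos_of_lt_pi hpos hπ).ne').continuousAt.continuousWithinAt

lemma continuousOn_length : ContinuousOn length (Ico 0 π) := by
  refine continuous_sinc.continuousOn.inv₀ ?_
  rintro θ ⟨h0, hπ⟩
  rcases h0.eq_or_lt with rfl | hpos
  · simp
  · rw [sinc_of_ne_zero hpos.ne']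
    exact (div_pos (sin_pos_of_pos_of_lt_pi hpos hπ) hpos).ne'

lemma strictMonoOn_area : StrictMonoOn area (Ico 0 π) := by
  refine strictMonoOn_of_deriv_pos (convex_Ico 0 π) continuousOn_area fun θ hθ => ?_
  rw [interior_Ico] at hθ
  have hs := sin_pos_of_pos_of_lt_pi hθ.1 hθ.2
  rw [(hasDerivAt_area hs.ne').deriv]
  exact div_pos (sin_sub_mul_cos_pos hθ.1 hθ.2) (by positivity)

lemma strictMonoOn_length : StrictMonoOn length (Ico 0 π) := by
  refine strictMonoOn_of_deriv_pos (convex_Ico 0 π) continuousOn_length fun θ hθ => ?_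
  rw [interior_Ico] at hθ
  have hs := sin_pos_of_pos_of_lt_pi hθ.1 hθ.2
  rw [(hasDerivAt_length hs.ne').deriv]
  exact div_pos (sin_sub_mul_cos_pos hθ.1 hθ.2) (by positivity)

lemma tendsto_area_nhdsLT_pi : Tendsto area (𝓝[<] π) atTop := by
  have hnum : Tendsto (fun θ => θ - sin θ * cos θ) (𝓝[<] π) (𝓝 π) := by
    have : Continuous fun θ => θ - sin θ * cos θ := by fun_prop
    simpa using (this.tendsto π).mono_left nhdsWithin_le_nhds
  have hden : Tendsto (fun θ => 4 * sin θ ^ 2) (𝓝[<] π) (𝓝[>] 0) := by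
    refine tendsto_nhdsWithin_iff.2 ⟨?_, ?_⟩
    · have : Continuous fun θ => 4 * sin θ ^ 2 := by fun_prop
      simpa using (this.tendsto π).mono_left nhdsWithin_le_nhds
    · filter_upwards [Ioo_mem_nhdsLT pi_pos] with θ hθ
      exact mul_pos four_pos (pow_pos (sin_pos_of_pos_of_lt_pi hθ.1 hθ.2) 2)
  exact hnum.pos_mul_atTop pi_pos (tendsto_inv_nhdsGT_zero.comp hden)

lemma surjOn_area : SurjOn area (Ico 0 π) (Ici 0) := by
  intro a ha
  obtain ⟨θ, hθa, hθ0, hθπ⟩ :=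
    ((tendsto_area_nhdsLT_pi.eventually_gt_atTop a).and (Ioo_mem_nhdsLT pi_pos)).exists
  have hIcc : Icc 0 θ ⊆ Ico 0 π := Icc_subset_Ico_right hθπ
  obtain ⟨φ, hφ, rfl⟩ := intermediate_value_Icc hθ0.le (continuousOn_area.mono hIcc)
    ⟨by rwa [area_zero], hθa.le⟩
  exact ⟨φ, hIcc hφ, rfl⟩

lemma one_add_sq_div_le_length {θ : ℝ} (h0 : 0 ≤ θ) (h : θ < π) :
    1 + θ ^ 2 / (2 * π ^ 2) ≤ length θ := by
  rcases h0.eq_or_lt with rfl | hpos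
  · simp [length_zero]
  have hs := sin_pos_of_pos_of_lt_pi hpos h
  have hsin := sin_le_mul_one_sub h0 h.le
  set u := θ ^ 2 / (2 * π ^ 2)
  have hu : 0 ≤ u := by positivity
  rw [length_of_ne_zero hpos.ne', le_div_iff₀ hs]
  calc (1 + u) * sin θ ≤ (1 + u) * (θ * (1 - u)) := by gcongr
    _ = θ - θ * u ^ 2 := by ring
    _ ≤ θ := sub_le_self _ (by positivity)

/-- Cauchy's mean value theorem for `length` against `area`: `length' = 2 sin θ · area'`. -/
lemma exists_length_sub_eq_two_sin_mul {θ₁ θ₂ : ℝ} (h0 : 0 ≤ θ₁) (h12 : θ₁ < θ₂) (h2 : θ₂ < π) :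
    ∃ c ∈ Ioo θ₁ θ₂, length θ₂ - length θ₁ = 2 * sin c * (area θ₂ - area θ₁) := by
  have hsub : Icc θ₁ θ₂ ⊆ Ico 0 π := fun x hx => ⟨h0.trans hx.1, hx.2.trans_lt h2⟩
  have hpos {c : ℝ} (hc : c ∈ Ioo θ₁ θ₂) : 0 < c := h0.trans_lt hc.1
  have hsin {c : ℝ} (hc : c ∈ Ioo θ₁ θ₂) : 0 < sin c :=
    sin_pos_of_pos_of_lt_pi (hpos hc) (hc.2.trans h2)
  obtain ⟨c, hc, hmvt⟩ := exists_ratio_hasDerivAt_eq_ratio_slope area _ h12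
    (continuousOn_area.mono hsub) (fun c hc => hasDerivAt_area (hsin hc).ne') length _
    (continuousOn_length.mono hsub) (fun c hc => hasDerivAt_length (hsin hc).ne')
  refine ⟨c, hc, ?_⟩
  have hs := hsin hc
  have hD : 0 < (sin c - c * cos c) / (2 * sin c ^ 3) :=
    div_pos (sin_sub_mul_cos_pos (hpos hc) (hc.2.trans h2)) (by positivity)
  refine mul_right_cancel₀ hD.ne' (hmvt.trans ?_)
  field_simp

section Arc

variable {arc : ℝ → ℝ}

lemma strictMonoOn_arc (harc : ∀ θ ∈ Ico 0 π, arc (area θ) = length θ) :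
    StrictMonoOn arc (Ici 0) :=
  strictMonoOn_area.of_comp_of_surjOn surjOn_area
    (strictMonoOn_length.congr fun θ hθ => (harc θ hθ).symm)

lemma convexOn_arc (harc : ∀ θ ∈ Ico 0 π, arc (area θ) = length θ) :
    ConvexOn ℝ (Icc 0 (π / 8)) arc := by
  have hπ := pi_pos
  refine convexOn_of_slope_mono_adjacent (convex_Icc 0 (π / 8)) ?_
  rintro x y z ⟨hx, -⟩ ⟨-, hz⟩ hxy hyz
  obtain ⟨θx, hθx, rfl⟩ := surjOn_area (mem_Ici.2 hx)
  obtain ⟨θy, hθy, rfl⟩ := surjOn_area (mem_Ici.2 (hx.trans hxy.le))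
  obtain ⟨θz, hθz, rfl⟩ := surjOn_area (mem_Ici.2 (hx.trans (hxy.trans hyz).le))
  have hθxy : θx < θy := (strictMonoOn_area.lt_iff_lt hθx hθy).1 hxy
  have hθyz : θy < θz := (strictMonoOn_area.lt_iff_lt hθy hθz).1 hyz
  have hθz2 : θz ≤ π / 2 := by
    rw [← area_pi_div_two] at hz
    exact (strictMonoOn_area.le_iff_le hθz ⟨by positivity, by linarith⟩).1 hz
  obtain ⟨c₁, hc₁, h₁⟩ := exists_length_sub_eq_two_sin_mul hθx.1 hθxy hθy.2
  obtain ⟨c₂, hc₂, h₂⟩ := exists_length_sub_eq_two_sin_mul hθy.1 hθyz hθz.2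
  have hsin : sin c₁ < sin c₂ := strictMonoOn_sin
    ⟨by linarith [hθx.1, hc₁.1], by linarith [hc₁.2]⟩
    ⟨by linarith [hθy.1, hc₂.1], by linarith [hc₂.2, hθz2]⟩ (hc₁.2.trans hc₂.1)
  rw [harc _ hθx, harc _ hθy, harc _ hθz, h₁, h₂,
    mul_div_cancel_right₀ _ (sub_pos.2 hxy).ne', mul_div_cancel_right₀ _ (sub_pos.2 hyz).ne']
  linarith

lemma one_add_sq_div_five_le_arc (harc : ∀ θ ∈ Ico 0 π, arc (area θ) = length θ) {a : ℝ}
    (ha : a ∈ Ico 0 (1 / 5)) : 1 + 1 / 5 * a ^ 2 ≤ arc a := by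
  have hπ := pi_pos
  obtain ⟨θ, hθ, rfl⟩ := surjOn_area (mem_Ici.2 ha.1)
  have hθ2 : θ ≤ π / 2 := by
    rw [← strictMonoOn_area.le_iff_le hθ ⟨by positivity, by linarith⟩, area_pi_div_two]
    linarith [ha.2, pi_gt_three]
  have harea := area_le hθ.1 hθ2
  have hsq : 1 / 5 * area θ ^ 2 ≤ θ ^ 2 / (2 * π ^ 2) := by
    have ha2 : area θ ^ 2 ≤ θ ^ 2 / 4 := by nlinarith [ha.1]
    have hπ2 : π ^ 2 ≤ 10 := by nlinarith [pi_lt_d2]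
    rw [le_div_iff₀ (by positivity)]
    nlinarith [mul_le_mul_of_nonneg_left hπ2 (sq_nonneg (area θ))]
  rw [harc θ hθ]
  linarith [one_add_sq_div_le_length hθ.1 hθ.2]

end Arc

end ChordArc

/-- `arc : [0,∞) → [1,∞)` is the length of the circular arc lying above a chord of
length 1 and enclosing area `a` with the chord.  It is characterized by elementary
circle geometry: the arc subtending a half-angle `θ ∈ (0,π)` at the center has radius
`1/(2 sin θ)`, length `θ / sin θ` and encloses area `(θ − sin θ cos θ)/(4 sin² θ)`.
Then `arc` is strictly increasing on `[0,∞)`, convex on `[0, π/8]`, and there is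
`η > 0` with `arc a ≥ 1 + η a²` for `a ∈ [0, η)`. -/
theorem arc_strictMono_convex_quadratic_lower_bound (arc : ℝ → ℝ)
    (h0 : arc 0 = 1)
    (hchar : ∀ θ ∈ Set.Ioo (0 : ℝ) π,
      arc ((θ - Real.sin θ * Real.cos θ) / (4 * Real.sin θ ^ 2)) = θ / Real.sin θ) :
    StrictMonoOn arc (Set.Ici 0) ∧ ConvexOn ℝ (Set.Icc 0 (π / 8)) arc ∧
      ∃ η > 0, ∀ a ∈ Set.Ico (0 : ℝ) η, arc a ≥ 1 + η * a ^ 2 := by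
  have harc : ∀ θ ∈ Ico 0 π, arc (ChordArc.area θ) = ChordArc.length θ := by
    rintro θ ⟨hθ0, hθπ⟩
    rcases hθ0.eq_or_lt with rfl | hpos
    · rwa [ChordArc.area_zero, ChordArc.length_zero]
    · rw [ChordArc.length_of_ne_zero hpos.ne']
      exact hchar θ ⟨hpos, hθπ⟩
  exact ⟨ChordArc.strictMonoOn_arc harc, ChordArc.convexOn_arc harc, 1 / 5, by norm_num,
    fun a ha => ChordArc.one_add_sq_div_five_le_arc harc ha⟩
end

section
/- Let ℓ₁,…,ℓ₆ ∈ (0,1] and a₁,…,a₆ ≥ 0 with a_i/ℓ_i² ∈ [0, π/8] for each i. Then, with arc the chord-1 arc-length function (convex and increasing on [0, π/8]), one has ∑_{i=1}^6 ℓ_i · arc(a_i/ℓ_i²) ≥ P · arc(A/P), where P = ∑ ℓ_i and A = ∑ a_i. -/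
open Real Set Finset

/-- Jensen step of the chordal isoperimetric inequality: with `arc` convex and
increasing on `[0, π/8]`, `ℓᵢ ∈ (0,1]`, `aᵢ ≥ 0` and `aᵢ/ℓᵢ² ∈ [0, π/8]`, one has
`∑ ℓᵢ · arc(aᵢ/ℓᵢ²) ≥ P · arc(A/P)` with `P = ∑ ℓᵢ`, `A = ∑ aᵢ`. -/
theorem jensen_chordal_step (arc : ℝ → ℝ)
    (hconv : ConvexOn ℝ (Set.Icc 0 (π / 8)) arc)
    (hmono : MonotoneOn arc (Set.Icc 0 (π / 8)))
    (ℓ a : Fin 6 → ℝ)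
    (hℓ : ∀ i, ℓ i ∈ Set.Ioc (0 : ℝ) 1)
    (ha : ∀ i, 0 ≤ a i)
    (hratio : ∀ i, a i / (ℓ i) ^ 2 ∈ Set.Icc (0 : ℝ) (π / 8)) :
    ∑ i, ℓ i * arc (a i / (ℓ i) ^ 2) ≥
      (∑ i, ℓ i) * arc ((∑ i, a i) / (∑ i, ℓ i)) := by
  set P : ℝ := ∑ i, ℓ i with hP
  have hPpos : 0 < P := Finset.sum_pos (fun i _ => (hℓ i).1) ⟨0, Finset.mem_univ 0⟩
  set w : Fin 6 → ℝ := fun i => ℓ i / P with hw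
  set x : Fin 6 → ℝ := fun i => a i / (ℓ i) ^ 2 with hx
  have hw0 : ∀ i ∈ Finset.univ, (0 : ℝ) ≤ w i :=
    fun i _ => div_nonneg (hℓ i).1.le hPpos.le
  have hw1 : ∑ i, w i = 1 := by
    rw [hw]; rw [← Finset.sum_div]; exact div_self hPpos.ne'
  have hxmem : ∀ i ∈ Finset.univ, x i ∈ Set.Icc (0 : ℝ) (π / 8) := fun i _ => hratio i
  -- Jensen
  have hjensen := hconv.map_sum_le hw0 hw1 hxmem
  -- the weighted average
  have havg_mem : (∑ i, w i • x i) ∈ Set.Icc (0 : ℝ) (π / 8) :=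
    (convex_Icc 0 (π / 8)).sum_mem hw0 hw1 hxmem
  -- A/P ≤ avg
  have hkey : (∑ i, a i) / P ≤ ∑ i, w i • x i := by
    rw [Finset.sum_div]
    apply Finset.sum_le_sum
    intro i _
    have hℓi := hℓ i
    have hℓne : ℓ i ≠ 0 := hℓi.1.ne'
    have h2 : w i • x i = (a i / ℓ i) / P := by
      rw [smul_eq_mul, hw, hx]
      field_simp
    rw [h2]
    gcongr
    exact le_div_self (ha i) hℓi.1 hℓi.2
  have hAP_mem : (∑ i, a i) / P ∈ Set.Icc (0 : ℝ) (π / 8) := by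
    constructor
    · exact div_nonneg (Finset.sum_nonneg fun i _ => ha i) hPpos.le
    · exact le_trans hkey havg_mem.2
  have hmono' : arc ((∑ i, a i) / P) ≤ arc (∑ i, w i • x i) :=
    hmono hAP_mem havg_mem hkey
  have : P * arc ((∑ i, a i) / P) ≤ P * (∑ i, w i • arc (x i)) :=
    mul_le_mul_of_nonneg_left (le_trans hmono' hjensen) hPpos.le
  calc (∑ i, ℓ i) * arc ((∑ i, a i) / (∑ i, ℓ i)) ≤ P * (∑ i, w i • arc (x i)) := this
    _ = ∑ i, ℓ i * arc (x i) := by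
        rw [Finset.mul_sum]
        apply Finset.sum_congr rfl
        intro i _
        rw [smul_eq_mul, hw]
        field_simp
    _ = ∑ i, ℓ i * arc (a i / (ℓ i) ^ 2) := rfl
end

section
/- Let Π be a convex n-gon with area 1, vertices v₁,…,vₙ, radii r_i = |v_i − O| from the barycenter O, side lengths ℓ_i, and let Π₀ be the unit-area regular n-gon with vertices w₁,…,wₙ, radius r and side ℓ. Suppose max_i |v_i − w_i| < ε and v₁ = λ·w₁ for some λ > 0. If ρ_i is the rotation about O with ρ_i(v_i) = λ_i·w_i (λ_i > 0) with angle θ_i, then hd(∂Π, ∂Π₀) ≤ C·∑_{i=1}^n (r_i·|θ_i| + |r_i − r|) for a constant C depending only on n. -/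
open Real Set Finset

/-- Rotation of the plane `ℂ` about the origin by angle `θ`. -/
noncomputable def rotBy (θ : ℝ) (z : ℂ) : ℂ := Complex.exp (θ * Complex.I) * z

/-! Moving the vertex `vᵢ` onto `wᵢ` costs at most `rᵢ|θᵢ|` for the rotation plus `|rᵢ - r|` for
the radial scaling. Since thickenings of convex sets are convex, the convex hulls are therefore
within Hausdorff distance `maxᵢ |vᵢ - wᵢ| ≤ ∑ᵢ (rᵢ|θᵢ| + |rᵢ - r|)`, so `C = 1` works for every
`ε`. Passing to the boundaries of two convex bodies does not increase the Hausdorff distance: a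
boundary point `x` of `Π` at depth `t` inside `Π₀` produces the point `x + t u` of `Π₀`, where `u`
is an outer unit normal of `Π` at `x`, and this point is at distance at least `t` from `Π`. -/

open Metric MeasureTheory
open scoped RealInnerProductSpace

theorem norm_sub_le_of_rotBy_eq_ofReal_mul {θ lam : ℝ} {v w : ℂ} (hlam : 0 < lam)
    (h : rotBy θ v = lam * w) : ‖v - w‖ ≤ ‖v‖ * |θ| + |‖v‖ - ‖w‖| := by
  have hnorm : ‖v‖ = lam * ‖w‖ := by
    simpa [rotBy, Complex.norm_exp_ofReal_mul_I, abs_of_pos hlam] using congrArg norm h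
  have hrot : ‖v - rotBy θ v‖ ≤ ‖v‖ * |θ| := by
    calc ‖v - rotBy θ v‖ = ‖Complex.exp (Complex.I * θ) - 1‖ * ‖v‖ := by
          rw [rotBy, mul_comm (θ : ℂ), ← norm_neg, ← norm_mul]; ring_nf
      _ ≤ |θ| * ‖v‖ := by gcongr; exact Real.norm_exp_I_mul_ofReal_sub_one_le
      _ = ‖v‖ * |θ| := mul_comm _ _
  have hscale : ‖(lam : ℂ) * w - w‖ = |‖v‖ - ‖w‖| := by
    rw [hnorm, ← sub_one_mul, ← Complex.ofReal_one, ← Complex.ofReal_sub, norm_mul,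
      Complex.norm_real, Real.norm_eq_abs, ← sub_one_mul, abs_mul, abs_norm]
  calc ‖v - w‖ ≤ ‖v - rotBy θ v‖ + ‖rotBy θ v - w‖ := norm_sub_le_norm_sub_add_norm_sub _ _ _
    _ ≤ ‖v‖ * |θ| + |‖v‖ - ‖w‖| := add_le_add hrot (by rw [h, hscale])

section

variable {E : Type*} [SeminormedAddCommGroup E] [NormedSpace ℝ E] {ι : Type*}

theorem convexHull_range_subset_cthickening {v w : ι → E} {δ : ℝ}
    (h : ∀ i, dist (v i) (w i) ≤ δ) :
    convexHull ℝ (range v) ⊆ cthickening δ (convexHull ℝ (range w)) :=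
  convexHull_min
    (range_subset_iff.2 fun i =>
      mem_cthickening_of_dist_le _ _ _ _ (subset_convexHull ℝ _ (mem_range_self i)) (h i))
    ((convex_convexHull ℝ _).cthickening δ)

theorem hausdorffDist_convexHull_range_le {v w : ι → E} {δ : ℝ} (hδ : 0 ≤ δ)
    (h : ∀ i, dist (v i) (w i) ≤ δ) :
    hausdorffDist (convexHull ℝ (range v)) (convexHull ℝ (range w)) ≤ δ := by
  refine ENNReal.toReal_le_of_le_ofReal hδ (hausdorffEDist_le_of_infEDist ?_ ?_)
  · exact fun x hx => mem_cthickening_iff.1 (convexHull_range_subset_cthickening h hx)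
  · refine fun x hx => mem_cthickening_iff.1 (convexHull_range_subset_cthickening ?_ hx)
    exact fun i => dist_comm (w i) (v i) ▸ h i

end

theorem Convex.interior_nonempty_of_measure_ne_zero {E : Type*} [NormedAddCommGroup E]
    [NormedSpace ℝ E] [MeasurableSpace E] [BorelSpace E] [FiniteDimensional ℝ E]
    (μ : Measure E) [μ.IsAddHaarMeasure] {s : Set E} (hs : Convex ℝ s) (h : μ s ≠ 0) :
    (interior s).Nonempty := by
  by_contra! hint
  refine h (measure_mono_null ?_ (hs.addHaar_frontier μ))
  simpa [frontier, hint] using subset_closure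

section

variable {E : Type*} [NormedAddCommGroup E] [InnerProductSpace ℝ E] {A B : Set E} {x : E}

theorem Convex.exists_unit_normal_of_mem_frontier [CompleteSpace E] (hA : Convex ℝ A)
    (hAi : (interior A).Nonempty) (hx : x ∈ frontier A) :
    ∃ u : E, ‖u‖ = 1 ∧ ∀ a ∈ A, ⟪u, a⟫ ≤ ⟪u, x⟫ := by
  obtain ⟨f, hf⟩ := geometric_hahn_banach_open_point hA.interior isOpen_interior hx.2
  set n := (InnerProductSpace.toDual ℝ E).symm f
  have hn : ∀ y, ⟪n, y⟫ = f y := fun y => InnerProductSpace.toDual_symm_apply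
  have hn0 : n ≠ 0 := by
    rintro hn0
    obtain ⟨a, ha⟩ := hAi
    simpa [← hn, hn0] using hf a ha
  have hle : A ⊆ {a | f a ≤ f x} := by
    refine subset_closure.trans ?_
    rw [← hA.closure_interior_eq_closure_of_nonempty_interior hAi]
    exact (isClosed_le f.continuous continuous_const).closure_subset_iff.2
      fun a ha => (hf a ha).le
  refine ⟨‖n‖⁻¹ • n, by simp [norm_smul, hn0], fun a ha => ?_⟩
  simp only [inner_smul_left, hn, RCLike.conj_to_real]
  exact mul_le_mul_of_nonneg_left (hle ha) (by positivity)

theorem infDist_compl_le_hausdorffDist_of_mem_frontier [CompleteSpace E] (hA : Convex ℝ A)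
    (hAi : (interior A).Nonempty) (hfin : hausdorffEDist A B ≠ ⊤)
    (hx : x ∈ frontier A) : infDist x Bᶜ ≤ hausdorffDist A B := by
  obtain ⟨u, hu, hux⟩ := hA.exists_unit_normal_of_mem_frontier hAi hx
  refine le_of_forall_lt_imp_le_of_dense fun t ht => ?_
  rcases lt_or_ge t 0 with ht0 | ht0
  · exact ht0.le.trans hausdorffDist_nonneg
  -- `x + t • u` lies in `B`, yet every point of `A` is at distance at least `t` from it.
  have hpB : x + t • u ∈ B := by
    by_contra hp
    have := infDist_le_dist_of_mem (x := x) (mem_compl hp)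
    rw [dist_self_add_right, norm_smul, hu, mul_one, Real.norm_of_nonneg ht0] at this
    linarith
  have hfar : t ≤ infDist (x + t • u) A := by
    refine (le_infDist (hAi.mono interior_subset)).2 fun a ha => ?_
    calc t = ⟪u, x + t • u⟫ - ⟪u, x⟫ := by
          rw [inner_add_right, inner_smul_right, real_inner_self_eq_norm_sq, hu]; ring
      _ ≤ ⟪u, x + t • u - a⟫ := by rw [inner_sub_right]; linarith [hux a ha]
      _ ≤ dist (x + t • u) a := by
          rw [dist_eq_norm]
          exact (real_inner_le_norm _ _).trans (by rw [hu, one_mul])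
  rw [hausdorffDist_comm]
  exact hfar.trans (infDist_le_hausdorffDist_of_mem hpB (by rwa [hausdorffEDist_comm]))

variable [FiniteDimensional ℝ E] [Nontrivial E]

theorem infDist_frontier_le_hausdorffDist (hA : Convex ℝ A) (hAc : IsCompact A)
    (hAi : (interior A).Nonempty) (hBc : IsCompact B) (hBne : B.Nonempty)
    (hx : x ∈ frontier A) : infDist x (frontier B) ≤ hausdorffDist A B := by
  have hfin : hausdorffEDist A B ≠ ⊤ :=
    hausdorffEDist_ne_top_of_nonempty_of_bounded (hAi.mono interior_subset) hBne
      hAc.isBounded hBc.isBounded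
  by_cases hxB : x ∈ B
  · obtain ⟨y, hy, hxy⟩ := hBc.exists_mem_frontier_infDist_compl_eq_dist hxB
    calc infDist x (frontier B) ≤ dist x y := infDist_le_dist_of_mem hy
      _ = infDist x Bᶜ := hxy.symm
      _ ≤ hausdorffDist A B := infDist_compl_le_hausdorffDist_of_mem_frontier hA hAi hfin hx
  · obtain ⟨y, hy, hxy⟩ := exists_mem_frontier_infDist_compl_eq_dist (mem_compl hxB)
      (by simpa using hBne.ne_empty)
    rw [frontier_compl] at hy
    rw [compl_compl] at hxy
    calc infDist x (frontier B) ≤ dist x y := infDist_le_dist_of_mem hy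
      _ = infDist x B := hxy.symm
      _ ≤ hausdorffDist A B :=
          infDist_le_hausdorffDist_of_mem (hAc.isClosed.frontier_subset hx) hfin

theorem hausdorffDist_frontier_le (hA : Convex ℝ A) (hAc : IsCompact A)
    (hAi : (interior A).Nonempty) (hB : Convex ℝ B) (hBc : IsCompact B)
    (hBi : (interior B).Nonempty) :
    hausdorffDist (frontier A) (frontier B) ≤ hausdorffDist A B := by
  refine hausdorffDist_le_of_infDist hausdorffDist_nonneg (fun x hx => ?_) fun x hx => ?_
  · exact infDist_frontier_le_hausdorffDist hA hAc hAi hBc (hBi.mono interior_subset) hx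
  · rw [hausdorffDist_comm]
    exact infDist_frontier_le_hausdorffDist hB hBc hBi hAc (hAi.mono interior_subset) hx

end

theorem hexagon_vertex_hausdorff_estimate_general (n : ℕ) [NeZero n] :
    ∃ C > (0 : ℝ), ∃ ε > (0 : ℝ),
      ∀ (v w : Fin n → ℂ) (r : ℝ) (θ lam : Fin n → ℝ),
        0 < r →
        (∀ i : Fin n, w i = (r : ℂ) * Complex.exp (2 * π * (i : ℕ) / n * Complex.I)) →
        MeasureTheory.volume (convexHull ℝ (Set.range v)) = 1 →
        MeasureTheory.volume (convexHull ℝ (Set.range w)) = 1 →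
        (∀ i, ‖v i - w i‖ < ε) →
        0 < lam 0 → v 0 = (lam 0 : ℂ) * w 0 →
        (∀ i, 0 < lam i) →
        (∀ i, rotBy (θ i) (v i) = (lam i : ℂ) * w i) →
        θ 0 = 0 →
        Metric.hausdorffDist (frontier (convexHull ℝ (Set.range v)))
            (frontier (convexHull ℝ (Set.range w)))
          ≤ C * ∑ i, (‖v i‖ * |θ i| + |‖v i‖ - r|) := by
  refine ⟨1, one_pos, 1, one_pos, fun v w r θ lam hr hw hv1 hw1 _ _ _ hlam hrot _ => ?_⟩
  have hwr : ∀ i, ‖w i‖ = r := fun i => by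
    simp [hw i, Complex.norm_exp, abs_of_pos hr]
  have hvw : ∀ i, dist (v i) (w i) ≤ ∑ j, (‖v j‖ * |θ j| + |‖v j‖ - r|) := fun i =>
    calc dist (v i) (w i) ≤ ‖v i‖ * |θ i| + |‖v i‖ - r| := by
          simpa [dist_eq_norm, hwr i] using norm_sub_le_of_rotBy_eq_ofReal_mul (hlam i) (hrot i)
      _ ≤ _ := single_le_sum (f := fun j => ‖v j‖ * |θ j| + |‖v j‖ - r|)
          (fun j _ => by positivity) (mem_univ i)
  have hint : ∀ u : Fin n → ℂ, volume (convexHull ℝ (range u)) = 1 →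
      (interior (convexHull ℝ (range u))).Nonempty := fun u hu =>
    (convex_convexHull ℝ _).interior_nonempty_of_measure_ne_zero volume (by simp [hu])
  rw [one_mul]
  calc hausdorffDist (frontier (convexHull ℝ (range v))) (frontier (convexHull ℝ (range w)))
      ≤ hausdorffDist (convexHull ℝ (range v)) (convexHull ℝ (range w)) :=
        hausdorffDist_frontier_le (convex_convexHull ℝ _) ((finite_range v).isCompact_convexHull ℝ)
          (hint v hv1) (convex_convexHull ℝ _) ((finite_range w).isCompact_convexHull ℝ)
          (hint w hw1)
    _ ≤ _ := hausdorffDist_convexHull_range_le (by positivity) hvw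

/-- Vertex estimate (estimate (bene -1)): let `Π` be a convex unit-area `n`-gon with
vertices `v i` and barycenter at the origin, `Π₀` the unit-area regular `n`-gon with
vertices `w i = r·e^{2πik/n}`, `max_i |v i − w i| < ε`, `v 0 = λ₀·w 0` with `λ₀ > 0`,
and for each `i` let `θ i` be the angle of a rotation `ρᵢ` about the origin with
`ρᵢ(v i) = λᵢ·w i`, `λᵢ > 0`. Then
`hd(∂Π, ∂Π₀) ≤ C · ∑ᵢ (rᵢ·|θᵢ| + |rᵢ − r|)` where `rᵢ = |v i|`,
for constants `C, ε` depending only on `n`. -/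
theorem hexagon_vertex_hausdorff_estimate (n : ℕ) [NeZero n] (hn : 3 ≤ n) :
    ∃ C > (0 : ℝ), ∃ ε > (0 : ℝ),
      ∀ (v w : Fin n → ℂ) (r : ℝ) (θ lam : Fin n → ℝ),
        0 < r →
        (∀ i : Fin n, w i = (r : ℂ) * Complex.exp (2 * π * (i : ℕ) / n * Complex.I)) →
        MeasureTheory.volume (convexHull ℝ (Set.range v)) = 1 →
        MeasureTheory.volume (convexHull ℝ (Set.range w)) = 1 →
        (∀ i, ‖v i - w i‖ < ε) →
        0 < lam 0 → v 0 = (lam 0 : ℂ) * w 0 →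
        (∀ i, 0 < lam i) →
        (∀ i, rotBy (θ i) (v i) = (lam i : ℂ) * w i) →
        θ 0 = 0 →
        Metric.hausdorffDist (frontier (convexHull ℝ (Set.range v)))
            (frontier (convexHull ℝ (Set.range w)))
          ≤ C * ∑ i, (‖v i‖ * |θ i| + |‖v i‖ - r|) :=
  hexagon_vertex_hausdorff_estimate_general n
end
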